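/- With the hypotheses above (φ unital positive sending C[0,1]_α to C[0,1]_β, connected Borel partition with 0 ∈ X₁, 1 ∈ Xₙ), one has μ₀(X₁) = β μ₁(X₁) + (1−β)/(1−α) and μ₀(Xₙ) = β μ₁(Xₙ) − α(1−β)/(1−α). In particular, if α = β then φ(f)(0) = f(0) and φ(f)(1) = f(1) for all f ∈ C[0,1]. -/

import Mathlib

open ContinuousMap MeasureTheory
open scoped NNReal

/-!
Applying the boundary condition to `f - k • 1`, where the constant `k` is chosen so that this
function satisfies it, gives `φ f 0 = β φ f 1 + (1 - β)/(1 - α) (f 0 - α f 1)` for every `f`.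
With `c := (1 - β)/(1 - α)` this says that the finite Borel measures `μ₀ + cα δ₁` and
`β μ₁ + c δ₀` have the same integrals against continuous functions, hence are equal, and
the two formulas are this identity evaluated on `X₁` (which contains `0` but not `1`) and
on `Xₙ`. When `α = β` we have `c = 1`, and evaluating on `{0}ᶜ` and `{1}ᶜ` forces
`μ₀ = δ₀` and `μ₁ = δ₁`.
-/

theorem map_apply_eq_of_boundary_condition {X Y : Type*} [TopologicalSpace X]
    [TopologicalSpace Y] {α β : ℝ} (hα : α ≠ 1) {x₀ x₁ : X} {y₀ y₁ : Y}
    (φ : C(X, ℝ) →ₗ[ℝ] C(Y, ℝ)) (hunital : φ 1 = 1)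
    (hsub : ∀ f : C(X, ℝ), f x₀ = α * f x₁ → φ f y₀ = β * φ f y₁) (f : C(X, ℝ)) :
    φ f y₀ = β * φ f y₁ + (1 - β) / (1 - α) * (f x₀ - α * f x₁) := by
  have hα' : 1 - α ≠ 0 := sub_ne_zero.2 hα.symm
  set c := (f x₀ - α * f x₁) / (1 - α) with hc
  have hg : φ f y₀ - c = β * (φ f y₁ - c) := by
    have hcond : (f - c • 1) x₀ = α * (f - c • 1) x₁ := by
      simp only [coe_sub, coe_smul, coe_one, Pi.sub_apply, Pi.smul_apply, Pi.one_apply,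
        smul_eq_mul, mul_one, c]
      field_simp
      ring
    simpa [hunital] using hsub _ hcond
  rw [show (1 - β) / (1 - α) * (f x₀ - α * f x₁) = (1 - β) * c by rw [hc]; ring]
  linarith

theorem integral_eq_of_measureReal_compl_singleton {X E : Type*} [MeasurableSpace X]
    [NormedAddCommGroup E] [NormedSpace ℝ E] [CompleteSpace E] {μ : Measure X}
    [IsProbabilityMeasure μ] {x : X} (h : μ.real {x}ᶜ = 0) (f : X → E) :
    ∫ y, f y ∂μ = f x := by
  have hae : ∀ᵐ y ∂μ, y = x :=
    (measure_eq_zero_iff_ae_notMem.1 ((measureReal_eq_zero_iff).1 h)).mono fun y hy => by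
      simpa using hy
  rw [integral_congr_ae (hae.mono fun y hy => congrArg f hy), integral_const, probReal_univ,
    one_smul]

section

variable {X : Type*} [TopologicalSpace X] [MeasurableSpace X] [BorelSpace X]
  [HasOuterApproxClosed X]

theorem add_smul_dirac_eq_of_integral_eq {μ₀ μ₁ : Measure X} [IsFiniteMeasure μ₀]
    [IsFiniteMeasure μ₁] {x₀ x₁ : X} {b c d : ℝ≥0}
    (h : ∀ f : C(X, ℝ), ∫ x, f x ∂μ₀ = b * ∫ x, f x ∂μ₁ + c * f x₀ - d * f x₁) :
    μ₀ + d • Measure.dirac x₁ = b • μ₁ + c • Measure.dirac x₀ := by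
  refine ext_of_forall_integral_eq_of_IsFiniteMeasure fun f => ?_
  have hf := f.continuous.stronglyMeasurable
  have hint := h f.toContinuousMap
  rw [BoundedContinuousFunction.coe_toContinuousMap] at hint
  rw [integral_add_measure (f.integrable _) (f.integrable _),
    integral_add_measure (f.integrable _) (f.integrable _), integral_smul_nnreal_measure,
    integral_smul_nnreal_measure, integral_smul_nnreal_measure, integral_dirac' _ _ hf,
    integral_dirac' _ _ hf, NNReal.smul_def, NNReal.smul_def, NNReal.smul_def, smul_eq_mul,
    smul_eq_mul, smul_eq_mul]
  linarith

theorem measureReal_add_indicator_eq_of_integral_eq {μ₀ μ₁ : Measure X} [IsFiniteMeasure μ₀]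
    [IsFiniteMeasure μ₁] {x₀ x₁ : X} {b c d : ℝ≥0}
    (h : ∀ f : C(X, ℝ), ∫ x, f x ∂μ₀ = b * ∫ x, f x ∂μ₁ + c * f x₀ - d * f x₁)
    {A : Set X} (hA : MeasurableSet A) :
    μ₀.real A + d * A.indicator 1 x₁ = b * μ₁.real A + c * A.indicator 1 x₀ := by
  have hdirac (x : X) : (Measure.dirac x).real A = A.indicator 1 x := by
    by_cases hx : x ∈ A <;> simp [Measure.real, Measure.dirac_apply' _ hA, hx]
  have hA := congrArg (Measure.real · A) (add_smul_dirac_eq_of_integral_eq h)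
  rwa [measureReal_add_apply, measureReal_add_apply, measureReal_nnreal_smul_apply,
    measureReal_nnreal_smul_apply, measureReal_nnreal_smul_apply, hdirac, hdirac] at hA

theorem integral_eq_eval_of_forall_integral_eq [MeasurableSingletonClass X] {μ₀ μ₁ : Measure X}
    [IsProbabilityMeasure μ₀] [IsProbabilityMeasure μ₁] {x₀ x₁ : X} (hx : x₀ ≠ x₁) {a : ℝ≥0}
    (ha : 0 < a) (h : ∀ f : C(X, ℝ), ∫ x, f x ∂μ₀ = a * ∫ x, f x ∂μ₁ + f x₀ - a * f x₁)
    (f : X → ℝ) : ∫ x, f x ∂μ₀ = f x₀ ∧ ∫ x, f x ∂μ₁ = f x₁ := by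
  have hmass {A : Set X} (hA : MeasurableSet A) :=
    measureReal_add_indicator_eq_of_integral_eq (c := 1) (by simpa using h) hA
  have h₀ := hmass (measurableSet_singleton x₀).compl
  have h₁ := hmass (measurableSet_singleton x₁).compl
  simp only [Set.indicator, Set.mem_compl_iff, Set.mem_singleton_iff, hx, hx.symm,
    not_false_eq_true, not_true_eq_false, ↓reduceIte, Pi.one_apply, mul_one, mul_zero, add_zero,
    NNReal.coe_one] at h₀ h₁
  have ha' : (0 : ℝ) < a := ha
  refine ⟨integral_eq_of_measureReal_compl_singleton ?_ f,
    integral_eq_of_measureReal_compl_singleton ?_ f⟩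
  · nlinarith [measureReal_nonneg (μ := μ₀) (s := {x₀}ᶜ),
      measureReal_le_one (μ := μ₁) (s := {x₀}ᶜ)]
  · nlinarith [measureReal_nonneg (μ := μ₁) (s := {x₁}ᶜ),
      measureReal_le_one (μ := μ₀) (s := {x₁}ᶜ)]

end

theorem stmt14 (α β : ℝ) (hα : α ∈ Set.Ioo (0 : ℝ) 1) (hβ : β ∈ Set.Ioo (0 : ℝ) 1)
    (φ : C(unitInterval, ℝ) →ₗ[ℝ] C(unitInterval, ℝ))
    (hunital : φ 1 = 1)
    (hsub : ∀ f : C(unitInterval, ℝ), f 0 = α * f 1 → φ f 0 = β * φ f 1)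
    (μ₀ μ₁ : Measure unitInterval)
    [IsProbabilityMeasure μ₀] [IsProbabilityMeasure μ₁]
    (hμ₀ : ∀ f : C(unitInterval, ℝ), φ f 0 = ∫ t, f t ∂μ₀)
    (hμ₁ : ∀ f : C(unitInterval, ℝ), φ f 1 = ∫ t, f t ∂μ₁)
    (n : ℕ) (hn : 2 ≤ n) (X : Fin n → Set unitInterval)
    (hmeas : ∀ i, MeasurableSet (X i))
    (hdisj : Pairwise (Function.onFun Disjoint X))
    (h0 : (0 : unitInterval) ∈ X ⟨0, by omega⟩)
    (h1 : (1 : unitInterval) ∈ X ⟨n - 1, by omega⟩) :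
    (μ₀ (X ⟨0, by omega⟩)).toReal =
      β * (μ₁ (X ⟨0, by omega⟩)).toReal + (1 - β) / (1 - α) ∧
    (μ₀ (X ⟨n - 1, by omega⟩)).toReal =
      β * (μ₁ (X ⟨n - 1, by omega⟩)).toReal - α * (1 - β) / (1 - α) ∧
    (α = β → ∀ f : C(unitInterval, ℝ), φ f 0 = f 0 ∧ φ f 1 = f 1) := by
  set c := (1 - β) / (1 - α) with hc
  have hc0 : 0 ≤ c := div_nonneg (by linarith [hβ.2]) (by linarith [hα.2])
  have hint (f : C(unitInterval, ℝ)) :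
      ∫ t, f t ∂μ₀ = β * ∫ t, f t ∂μ₁ + c * f 0 - c * α * f 1 := by
    rw [← hμ₀, ← hμ₁, map_apply_eq_of_boundary_condition hα.2.ne φ hunital hsub f]
    ring
  have hmass {A : Set unitInterval} (hA : MeasurableSet A) :=
    measureReal_add_indicator_eq_of_integral_eq (b := ⟨β, hβ.1.le⟩) (c := ⟨c, hc0⟩)
      (d := ⟨c * α, mul_nonneg hc0 hα.1.le⟩) hint hA
  have hne : (⟨0, by omega⟩ : Fin n) ≠ ⟨n - 1, by omega⟩ := by
    simp only [ne_eq, Fin.mk.injEq]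
    omega
  have h1' : (1 : unitInterval) ∉ X ⟨0, by omega⟩ := Set.disjoint_right.1 (hdisj hne) h1
  have h0' : (0 : unitInterval) ∉ X ⟨n - 1, by omega⟩ := Set.disjoint_left.1 (hdisj hne) h0
  refine ⟨?_, ?_, ?_⟩
  · have hX := hmass (hmeas ⟨0, by omega⟩)
    simp only [Set.indicator_of_mem h0, Set.indicator_of_notMem h1', Pi.one_apply, mul_one,
      mul_zero, add_zero] at hX
    exact hX
  · have hX := hmass (hmeas ⟨n - 1, by omega⟩)
    simp only [Set.indicator_of_mem h1, Set.indicator_of_notMem h0', Pi.one_apply, mul_one,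
      mul_zero, add_zero] at hX
    rw [show α * (1 - β) / (1 - α) = c * α by rw [hc]; ring]
    exact eq_sub_of_add_eq hX
  · rintro rfl f
    have hc1 : c = 1 := div_self (by linarith [hα.2])
    rw [hμ₀, hμ₁]
    exact integral_eq_eval_of_forall_integral_eq (a := ⟨α, hα.1.le⟩) zero_ne_one hα.1
      (fun g => by rw [hint g, hc1, one_mul, one_mul]; rfl) f
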